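/- Let n be a positive integer, σ > 0, μ ∈ ℝ, and p ≠ 0 with p·σ < n. Let X ~ Exp(μ, σ/n). Then the function α ↦ E[exp(p(X+α−μ)) − p(X+α−μ) − 1] is finite for every α ∈ ℝ and attains a strict global minimum on ℝ at α₀ = (1/p)·ln((n − p·σ)/n). Thus X + α₀ is the best location equivariant estimator of μ under this Linex-type loss. -/

import Mathlib

open MeasureTheory ProbabilityTheory Real
open scoped ENNReal

/-- Two-parameter exponential distribution `Exp(μ, θ)` with location `μ` and scale `θ`. -/
noncomputable def expLocMeasure (μ θ : ℝ) : Measure ℝ :=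
  volume.withDensity fun x =>
    ENNReal.ofReal (if μ < x then θ⁻¹ * Real.exp (-(x - μ) / θ) else 0)

/-- Gamma distribution `Gamma(a, θ)` with shape `a` and scale `θ`. -/
noncomputable def gammaScaleMeasure (a θ : ℝ) : Measure ℝ :=
  volume.withDensity fun x =>
    ENNReal.ofReal (if 0 < x then x ^ (a - 1) * Real.exp (-x / θ) / (Real.Gamma a * θ ^ a) else 0)

/-- The Linex loss `e^{pt} - pt - 1`. -/
noncomputable def linexLoss (p t : ℝ) : ℝ := Real.exp (p * t) - p * t - 1

/-- The Linex risk of an estimator `δ` of a location parameter `μ` at scale `σ`,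
with values in `[0, ∞]`. -/
noncomputable def linexRisk {Ω : Type*} [MeasurableSpace Ω] (P : Measure Ω)
    (p μ σ : ℝ) (δ : Ω → ℝ) : ℝ≥0∞ :=
  ∫⁻ ω, ENNReal.ofReal (linexLoss p ((δ ω - μ) / σ)) ∂P

/-!
With `Y = X - μ`, which has density `θ⁻¹ e^{-y/θ}` on `(0, ∞)` for `θ = σ/n`, the risk of
`X + α` is `e^{pα} E[e^{pY}] - p E[Y] - pα - 1 = e^{pα}/(1 - pθ) - pθ - pα - 1`, finite because `pθ < 1`.
With `c = 1 - pθ`, the part depending on `α` is `e^{pα}/c - pα = e^{t} - t - log c` for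
`t = pα - log c`, and `e^t - t > 1` unless `t = 0`.
-/

open Set

lemma linexLoss_nonneg (p t : ℝ) : 0 ≤ linexLoss p t := by
  have := add_one_le_exp (p * t)
  unfold linexLoss
  linarith

@[fun_prop]
lemma measurable_linexLoss (p : ℝ) : Measurable (linexLoss p) := by
  unfold linexLoss
  fun_prop

section ExponentialMoments

variable {r : ℝ}

lemma integrableOn_mul_exp_neg_mul (hr : 0 < r) :
    IntegrableOn (fun y => r * exp (-(r * y))) (Ioi 0) := by
  have : IntegrableOn (fun y => r * exp (-r * y)) (Ioi 0) :=
    (integrableOn_exp_mul_Ioi (neg_lt_zero.2 hr) 0).const_mul r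
  simpa only [neg_mul] using this

lemma integral_mul_exp_neg_mul (hr : 0 < r) : ∫ y in Ioi 0, r * exp (-(r * y)) = 1 := by
  simp_rw [← neg_mul]
  rw [integral_const_mul, integral_exp_mul_Ioi (neg_lt_zero.2 hr)]
  simp [hr.ne']

lemma mul_exp_neg_mul_mul_exp_mul (p : ℝ) :
    (fun y => r * exp (-(r * y)) * exp (p * y)) = fun y => r * exp ((p - r) * y) := by
  ext y
  rw [mul_assoc, ← exp_add]
  congr 2
  ring

lemma integrableOn_mul_exp_neg_mul_mul_exp_mul {p : ℝ} (hp : p < r) :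
    IntegrableOn (fun y => r * exp (-(r * y)) * exp (p * y)) (Ioi 0) := by
  rw [mul_exp_neg_mul_mul_exp_mul]
  exact (integrableOn_exp_mul_Ioi (sub_neg.2 hp) 0).const_mul r

lemma integral_mul_exp_neg_mul_mul_exp_mul {p : ℝ} (hp : p < r) :
    ∫ y in Ioi 0, r * exp (-(r * y)) * exp (p * y) = r / (r - p) := by
  rw [mul_exp_neg_mul_mul_exp_mul, integral_const_mul, integral_exp_mul_Ioi (sub_neg.2 hp),
    mul_zero, exp_zero, neg_div, ← div_neg, neg_sub, mul_one_div]

lemma integrableOn_mul_exp_neg_mul_mul_self (hr : 0 < r) :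
    IntegrableOn (fun y => r * exp (-(r * y)) * y) (Ioi 0) := by
  have : IntegrableOn (fun y : ℝ => r * (y ^ (1 : ℝ) * exp (-r * y ^ (1 : ℝ)))) (Ioi 0) :=
    (integrableOn_rpow_mul_exp_neg_mul_rpow (by norm_num) one_pos hr).const_mul r
  convert this using 2 with y
  rw [rpow_one]; ring_nf

lemma integral_mul_exp_neg_mul_mul_self (hr : 0 < r) :
    ∫ y in Ioi 0, r * exp (-(r * y)) * y = r⁻¹ := by
  have h := integral_rpow_mul_exp_neg_mul_Ioi two_pos hr
  norm_num [Real.Gamma_two] at h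
  simp_rw [mul_assoc, mul_comm (exp _)]
  rw [integral_const_mul, h]
  field_simp

end ExponentialMoments

lemma mul_exp_neg_mul_mul_linexLoss (r p a : ℝ) :
    (fun y => r * exp (-(r * y)) * linexLoss p (y + a)) = fun y =>
      exp (p * a) * (r * exp (-(r * y)) * exp (p * y)) - p * (r * exp (-(r * y)) * y) -
        (p * a + 1) * (r * exp (-(r * y))) := by
  ext y
  rw [linexLoss, mul_add, exp_add]
  ring

lemma integrableOn_mul_exp_neg_mul_mul_linexLoss {r p : ℝ} (hr : 0 < r) (hp : p < r) (a : ℝ) :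
    IntegrableOn (fun y => r * exp (-(r * y)) * linexLoss p (y + a)) (Ioi 0) := by
  rw [mul_exp_neg_mul_mul_linexLoss]
  exact (((integrableOn_mul_exp_neg_mul_mul_exp_mul hp).const_mul _).sub
    ((integrableOn_mul_exp_neg_mul_mul_self hr).const_mul _)).sub
    ((integrableOn_mul_exp_neg_mul hr).const_mul _)

lemma integral_mul_exp_neg_mul_mul_linexLoss {r p : ℝ} (hr : 0 < r) (hp : p < r) (a : ℝ) :
    ∫ y in Ioi 0, r * exp (-(r * y)) * linexLoss p (y + a) =
      exp (p * a) * (r / (r - p)) - p * r⁻¹ - (p * a + 1) := by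
  have h₁ := (integrableOn_mul_exp_neg_mul_mul_exp_mul hp).const_mul (exp (p * a))
  have h₂ := (integrableOn_mul_exp_neg_mul_mul_self hr).const_mul p
  have h₃ := (integrableOn_mul_exp_neg_mul hr).const_mul (p * a + 1)
  rw [mul_exp_neg_mul_mul_linexLoss, integral_sub (by exact h₁.sub h₂) h₃, integral_sub h₁ h₂,
    integral_const_mul, integral_const_mul, integral_const_mul,
    integral_mul_exp_neg_mul_mul_exp_mul hp, integral_mul_exp_neg_mul_mul_self hr,
    integral_mul_exp_neg_mul hr, mul_one]

lemma lintegral_expLocMeasure (μ θ : ℝ) {f : ℝ → ℝ≥0∞} (hf : Measurable f) :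
    ∫⁻ x, f x ∂expLocMeasure μ θ =
      ∫⁻ y in Ioi 0, ENNReal.ofReal (θ⁻¹ * exp (-(θ⁻¹ * y))) * f (y + μ) := by
  have hdens : Measurable fun x : ℝ =>
      ENNReal.ofReal (if μ < x then θ⁻¹ * exp (-(x - μ) / θ) else 0) :=
    ENNReal.measurable_ofReal.comp <| Measurable.ite measurableSet_Ioi (by fun_prop) (by fun_prop)
  rw [expLocMeasure, lintegral_withDensity_eq_lintegral_mul _ hdens hf,
    ← lintegral_add_right_eq_self _ μ, ← lintegral_indicator measurableSet_Ioi]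
  congr 1 with y
  by_cases hy : 0 < y
  · simp [hy, div_eq_inv_mul]
  · simp [hy]

lemma lintegral_linexLoss_expLocMeasure {μ θ p : ℝ} (hθ : 0 < θ) (hpθ : p * θ < 1) (a : ℝ) :
    ∫⁻ x, ENNReal.ofReal (linexLoss p (x + a - μ)) ∂expLocMeasure μ θ =
      ENNReal.ofReal (exp (p * a) / (1 - p * θ) - p * a - p * θ - 1) := by
  have hr : 0 < θ⁻¹ := inv_pos.2 hθ
  have hp : p < θ⁻¹ := by simpa only [one_div] using (lt_div_iff₀ hθ).2 hpθ
  rw [lintegral_expLocMeasure μ θ (by fun_prop)]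
  have hmul (y : ℝ) :
      ENNReal.ofReal (θ⁻¹ * exp (-(θ⁻¹ * y))) * ENNReal.ofReal (linexLoss p (y + a)) =
        ENNReal.ofReal (θ⁻¹ * exp (-(θ⁻¹ * y)) * linexLoss p (y + a)) :=
    (ENNReal.ofReal_mul (by positivity)).symm
  simp_rw [add_right_comm _ μ a, add_sub_cancel_right, hmul]
  rw [← ofReal_integral_eq_lintegral_ofReal (integrableOn_mul_exp_neg_mul_mul_linexLoss hr hp a)
    (.of_forall fun y => mul_nonneg (by positivity) (linexLoss_nonneg p _)),
    integral_mul_exp_neg_mul_mul_linexLoss hr hp]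
  congr 1
  field_simp
  ring

lemma exp_mul_div_sub_mul_at_log {c p : ℝ} (hc : 0 < c) (hp : p ≠ 0) :
    exp (p * (1 / p * log c)) / c - p * (1 / p * log c) = 1 - log c := by
  rw [← mul_assoc, mul_one_div_cancel hp, one_mul, exp_log hc, div_self hc.ne']

lemma one_sub_log_lt_exp_mul_div_sub_mul {c p a : ℝ} (hc : 0 < c) (hp : p ≠ 0)
    (ha : a ≠ 1 / p * log c) : 1 - log c < exp (p * a) / c - p * a := by
  have hpa : p * a - log c ≠ 0 := by
    rintro h
    apply ha
    field_simp
    linarith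
  have hexp : exp (p * a) / c = exp (p * a - log c) := by rw [exp_sub, exp_log hc]
  linarith [add_one_lt_exp hpa]

theorem stmt_4_general {Ω : Type*} [MeasurableSpace Ω] (P : Measure Ω)
    (n : ℕ) (hn : 0 < n) (σ : ℝ) (hσ : 0 < σ) (μ : ℝ)
    (p : ℝ) (hp : p ≠ 0) (hpσ : p * σ < n)
    (X : Ω → ℝ) (hX : Measurable X)
    (hXlaw : Measure.map X P = expLocMeasure μ (σ / n)) :
    (∀ α : ℝ, (∫⁻ ω, ENNReal.ofReal (linexLoss p (X ω + α - μ)) ∂P) ≠ ⊤) ∧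
    (∀ α : ℝ, α ≠ (1 / p) * Real.log (((n : ℝ) - p * σ) / n) →
      (∫⁻ ω, ENNReal.ofReal
          (linexLoss p (X ω + (1 / p) * Real.log (((n : ℝ) - p * σ) / n) - μ)) ∂P) <
        ∫⁻ ω, ENNReal.ofReal (linexLoss p (X ω + α - μ)) ∂P) := by
  have hn' : (0 : ℝ) < n := Nat.cast_pos.2 hn
  have hpθ : p * (σ / n) < 1 := by rwa [mul_div_assoc', div_lt_one hn']
  have hc : 1 - p * (σ / n) = ((n : ℝ) - p * σ) / n := by field_simp
  set c := ((n : ℝ) - p * σ) / n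
  have hc0 : 0 < c := hc ▸ sub_pos.2 hpθ
  have hrisk (α : ℝ) : ∫⁻ ω, ENNReal.ofReal (linexLoss p (X ω + α - μ)) ∂P =
      ENNReal.ofReal (exp (p * α) / c - p * α - p * (σ / n) - 1) := by
    rw [← hc, ← lintegral_linexLoss_expLocMeasure (div_pos hσ hn') hpθ, ← hXlaw,
      lintegral_map (by fun_prop) hX]
  refine ⟨fun α => hrisk α ▸ ENNReal.ofReal_ne_top, fun α hα => ?_⟩
  have hmin := one_sub_log_lt_exp_mul_div_sub_mul hc0 hp hα
  rw [hrisk, hrisk, exp_mul_div_sub_mul_at_log hc0 hp,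
    ENNReal.ofReal_lt_ofReal_iff_of_nonneg]
  · linarith
  · linarith [log_le_sub_one_of_pos hc0]

/-- For `X ~ Exp(μ, σ/n)` with `p·σ < n`, the risk `α ↦ E[exp(p(X+α−μ)) −
p(X+α−μ) − 1]` is finite everywhere and uniquely minimized at `α₀ = (1/p)·ln((n−pσ)/n)`. -/
theorem stmt_4 {Ω : Type*} [MeasurableSpace Ω] (P : Measure Ω) [IsProbabilityMeasure P]
    (n : ℕ) (hn : 0 < n) (σ : ℝ) (hσ : 0 < σ) (μ : ℝ)
    (p : ℝ) (hp : p ≠ 0) (hpσ : p * σ < n)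
    (X : Ω → ℝ) (hX : Measurable X)
    (hXlaw : Measure.map X P = expLocMeasure μ (σ / n)) :
    (∀ α : ℝ, (∫⁻ ω, ENNReal.ofReal (linexLoss p (X ω + α - μ)) ∂P) ≠ ⊤) ∧
    (∀ α : ℝ, α ≠ (1 / p) * Real.log (((n : ℝ) - p * σ) / n) →
      (∫⁻ ω, ENNReal.ofReal
          (linexLoss p (X ω + (1 / p) * Real.log (((n : ℝ) - p * σ) / n) - μ)) ∂P) <
        ∫⁻ ω, ENNReal.ofReal (linexLoss p (X ω + α - μ)) ∂P) :=
  stmt_4_general P n hn σ hσ μ p hp hpσ X hX hXlaw
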